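/- Let H be a Hilbert space, A, B, C ∈ L(H), h₁, h₂ > 0, and let τ_{-h} denote the delay (τ_{-h}u)(t) = u(t-h) on H_{ϱ,0}(ℝ; H). If ϱ > 0 satisfies ‖C‖ e^{-h₁ϱ} < 1, then for every f ∈ H_{ϱ,0}(ℝ; H) with ϱ also larger than (‖A‖ + ‖B‖e^{-h₂ϱ})/(1 - ‖C‖e^{-h₁ϱ}), the neutral equation in integrated form u - C τ_{-h₁} u = I(A u + B τ_{-h₂} u + f) (where I is integration from -∞) has a unique solution u ∈ H_{ϱ,0}(ℝ; H). -/

import Mathlib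

open MeasureTheory Real Set

/-- Squared weighted norm integrand total: `∫ ‖f t‖² e^{-2ϱt} dt`. -/
noncomputable def wInt (ϱ : ℝ) {H : Type*} [NormedAddCommGroup H] (f : ℝ → H) : ℝ :=
  ∫ t : ℝ, ‖f t‖ ^ 2 * Real.exp (-2 * ϱ * t)

/-- Membership in the weighted space `H_{ϱ,0}(ℝ; H)`. -/
def memW (ϱ : ℝ) {H : Type*} [NormedAddCommGroup H] (f : ℝ → H) : Prop :=
  AEStronglyMeasurable f volume ∧
    Integrable (fun t : ℝ => ‖f t‖ ^ 2 * Real.exp (-2 * ϱ * t))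

/-- The weighted norm `|f|_{ϱ,0}`. -/
noncomputable def wNorm (ϱ : ℝ) {H : Type*} [NormedAddCommGroup H] (f : ℝ → H) : ℝ :=
  Real.sqrt (wInt ϱ f)

/-!
`H_{ϱ,0}(ℝ; H)` is `L²` of the measure `e^{-2ϱt} dt`. Translating this measure by `h` only
rescales it by `e^{-2ϱh}`, so the delay `τ_{-h}` multiplies norms by exactly `e^{-hϱ}`. Integration
from `-∞` has norm at most `1/ϱ`: Cauchy–Schwarz against `e^{ϱs}` bounds `|∫_{s<t} g|²` by
`(e^{ϱt}/ϱ) ∫_{s<t} |g(s)|² e^{-ϱs} ds`, and integrating this against `e^{-2ϱt}` and exchanging the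
integrals (Tonelli) leaves `ϱ⁻² ∫ |g|² e^{-2ϱs} ds`. Hence
`u ↦ Cτ_{-h₁}u + I(Au + Bτ_{-h₂}u + f)` is Lipschitz with constant
`‖C‖e^{-h₁ϱ} + (‖A‖ + ‖B‖e^{-h₂ϱ})/ϱ < 1`, and the Banach fixed point theorem in `L²` gives the
unique solution.
-/

open scoped ENNReal NNReal

theorem exists_ae_fixedPoint_of_eLpNorm_contraction {α E : Type*} [MeasurableSpace α]
    {μ : Measure α} [NormedAddCommGroup E] [CompleteSpace E] {p : ℝ≥0∞} [Fact (1 ≤ p)]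
    {Φ : (α → E) → α → E} {k : ℝ≥0} (hk : k < 1)
    (hmem : ∀ u, MemLp u p μ → MemLp (Φ u) p μ)
    (hcongr : ∀ u v, u =ᵐ[μ] v → Φ u =ᵐ[μ] Φ v)
    (hlip : ∀ u v, MemLp u p μ → MemLp v p μ →
      eLpNorm (Φ u - Φ v) p μ ≤ k * eLpNorm (u - v) p μ) :
    ∃ u, MemLp u p μ ∧ Φ u =ᵐ[μ] u ∧ ∀ v, MemLp v p μ → Φ v =ᵐ[μ] v → v =ᵐ[μ] u := by
  let T : Lp E p μ → Lp E p μ := fun x => (hmem x (Lp.memLp x)).toLp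
  have hT : ∀ x, ⇑(T x) =ᵐ[μ] Φ x := fun x => MemLp.coeFn_toLp _
  have hT_contr : ContractingWith k T := ⟨hk, fun x y => by
    rw [Lp.edist_def, Lp.edist_def, eLpNorm_congr_ae ((hT x).sub (hT y))]
    exact hlip _ _ (Lp.memLp x) (Lp.memLp y)⟩
  obtain ⟨x₀, hx₀, hx₀_unique⟩ : ∃ x₀, T x₀ = x₀ ∧ ∀ y, T y = y → y = x₀ :=
    ⟨_, hT_contr.fixedPoint_isFixedPt, fun _ hy => hT_contr.fixedPoint_unique hy⟩
  refine ⟨x₀, Lp.memLp x₀, (hT x₀).symm.trans (by rw [hx₀]), fun v hv hv_fix => ?_⟩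
  have hy : T (hv.toLp v) = hv.toLp v :=
    Lp.ext <| (hT _).trans <| (hcongr _ _ hv.coeFn_toLp).trans <|
      hv_fix.trans hv.coeFn_toLp.symm
  rw [← hx₀_unique _ hy]
  exact hv.coeFn_toLp.symm

theorem sq_lintegral_mul_le {α : Type*} [MeasurableSpace α] (μ : Measure α) {f g : α → ℝ≥0∞}
    (hf : AEMeasurable f μ) (hg : AEMeasurable g μ) :
    (∫⁻ a, f a * g a ∂μ) ^ 2 ≤ (∫⁻ a, f a ^ 2 ∂μ) * ∫⁻ a, g a ^ 2 ∂μ := by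
  have h := ENNReal.lintegral_mul_le_Lp_mul_Lq μ Real.HolderConjugate.two_two hf hg
  simp only [Pi.mul_apply, ENNReal.rpow_two] at h
  calc (∫⁻ a, f a * g a ∂μ) ^ 2
      ≤ ((∫⁻ a, f a ^ 2 ∂μ) ^ (1 / 2 : ℝ) * (∫⁻ a, g a ^ 2 ∂μ) ^ (1 / 2 : ℝ)) ^ 2 := by
        gcongr
    _ = (∫⁻ a, f a ^ 2 ∂μ) * ∫⁻ a, g a ^ 2 ∂μ := by
        rw [mul_pow, ← ENNReal.rpow_natCast, ← ENNReal.rpow_natCast, ← ENNReal.rpow_mul,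
          ← ENNReal.rpow_mul]
        norm_num

theorem sq_eLpNorm_two {α E : Type*} [MeasurableSpace α] {μ : Measure α} [NormedAddCommGroup E]
    (f : α → E) : eLpNorm f 2 μ ^ 2 = ∫⁻ x, ‖f x‖ₑ ^ 2 ∂μ := by
  simpa using eLpNorm_nnreal_pow_eq_lintegral (μ := μ) (f := f) (p := 2) two_ne_zero

theorem ContinuousLinearMap.eLpNorm_comp_le {α 𝕜 E F : Type*} [MeasurableSpace α]
    [NontriviallyNormedField 𝕜] [NormedAddCommGroup E] [NormedSpace 𝕜 E] [NormedAddCommGroup F]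
    [NormedSpace 𝕜 F] (L : E →L[𝕜] F) (u : α → E) (p : ℝ≥0∞) (μ : Measure α) :
    eLpNorm (fun a => L (u a)) p μ ≤ ‖L‖ₑ * eLpNorm u p μ :=
  eLpNorm_le_mul_eLpNorm_of_ae_le_mul' (ae_of_all _ fun a => L.le_opENorm (u a)) p

theorem continuous_primitive_Iio {E : Type*} [NormedAddCommGroup E] [NormedSpace ℝ E]
    {μ : Measure ℝ} [NullSingletonClass μ] {g : ℝ → E} (hg : ∀ t, IntegrableOn g (Iio t) μ) :
    Continuous fun t => ∫ s in Iio t, g s ∂μ :=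
  continuous_iff_continuousAt.2 fun t =>
    (hg (t + 1)).continuousOn_Iic_primitive_Iio.continuousAt (Iic_mem_nhds (lt_add_one t))

section ExponentialWeights

variable {ϱ : ℝ}

theorem lintegral_Ioi_exp_neg_mul (hϱ : 0 < ϱ) (s : ℝ) :
    ∫⁻ t in Ioi s, ENNReal.ofReal (exp (-ϱ * t)) = ENNReal.ofReal (exp (-ϱ * s) / ϱ) := by
  rw [← ofReal_integral_eq_lintegral_ofReal (integrableOn_exp_mul_Ioi (neg_neg_of_pos hϱ) s)
    (ae_of_all _ fun _ => (exp_pos _).le), integral_exp_mul_Ioi (neg_neg_of_pos hϱ),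
    neg_div_neg_eq]

theorem lintegral_Iio_exp_mul (hϱ : 0 < ϱ) (t : ℝ) :
    ∫⁻ s in Iio t, ENNReal.ofReal (exp (ϱ * s)) = ENNReal.ofReal (exp (ϱ * t) / ϱ) := by
  rw [setLIntegral_congr Iio_ae_eq_Iic, ← ofReal_integral_eq_lintegral_ofReal
    (integrableOn_exp_mul_Iic hϱ t) (ae_of_all _ fun _ => (exp_pos _).le),
    integral_exp_mul_Iic hϱ]

theorem sq_lintegral_Iio_le (hϱ : 0 < ϱ) {F : ℝ → ℝ≥0∞} (hF : AEMeasurable F) (t : ℝ) :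
    (∫⁻ s in Iio t, F s) ^ 2 ≤
      ENNReal.ofReal (exp (ϱ * t) / ϱ) *
        ∫⁻ s in Iio t, ENNReal.ofReal (exp (-ϱ * s)) * F s ^ 2 := by
  have hsplit : ∀ s, F s * ENNReal.ofReal (exp (-ϱ * s / 2)) * ENNReal.ofReal (exp (ϱ * s / 2))
      = F s := fun s => by
    rw [mul_assoc, ← ENNReal.ofReal_mul (exp_pos _).le, ← exp_add]
    ring_nf
    simp
  have hsq₁ : ∀ s, (F s * ENNReal.ofReal (exp (-ϱ * s / 2))) ^ 2 =
      ENNReal.ofReal (exp (-ϱ * s)) * F s ^ 2 := fun s => by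
    rw [mul_pow, ← ENNReal.ofReal_pow (exp_pos _).le, ← exp_nat_mul]
    ring_nf
  have hsq₂ : ∀ s, ENNReal.ofReal (exp (ϱ * s / 2)) ^ 2 = ENNReal.ofReal (exp (ϱ * s)) :=
    fun s => by rw [← ENNReal.ofReal_pow (exp_pos _).le, ← exp_nat_mul]; ring_nf
  have h := sq_lintegral_mul_le (volume.restrict (Iio t))
    (f := fun s => F s * ENNReal.ofReal (exp (-ϱ * s / 2)))
    (g := fun s => ENNReal.ofReal (exp (ϱ * s / 2))) (hF.restrict.mul (by fun_prop)) (by fun_prop)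
  simp only [hsplit, hsq₁, hsq₂, lintegral_Iio_exp_mul hϱ] at h
  rwa [mul_comm] at h

theorem lintegral_exp_neg_mul_mul_lintegral_Iio (hϱ : 0 < ϱ) {G : ℝ → ℝ≥0∞}
    (hG : AEMeasurable G) :
    ∫⁻ t, ENNReal.ofReal (exp (-ϱ * t)) * ∫⁻ s in Iio t, G s =
      ENNReal.ofReal ϱ⁻¹ * ∫⁻ s, ENNReal.ofReal (exp (-ϱ * s)) * G s := by
  let K : ℝ → ℝ → ℝ≥0∞ := fun t s =>
    {p : ℝ × ℝ | p.2 < p.1}.indicator (fun p => ENNReal.ofReal (exp (-ϱ * p.1)) * G p.2) (t, s)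
  have hK : AEMeasurable (Function.uncurry K) (volume.prod volume) :=
    ((by fun_prop : Measurable fun p : ℝ × ℝ => ENNReal.ofReal (exp (-ϱ * p.1))).aemeasurable.mul
      (hG.comp_quasiMeasurePreserving Measure.quasiMeasurePreserving_snd)).indicator
      (measurableSet_lt measurable_snd measurable_fst)
  have hK_inner : ∀ t, ENNReal.ofReal (exp (-ϱ * t)) * ∫⁻ s in Iio t, G s = ∫⁻ s, K t s :=
    fun t => by
      rw [← lintegral_indicator measurableSet_Iio, ← lintegral_const_mul' _ _ ENNReal.ofReal_ne_top]
      refine lintegral_congr fun s => ?_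
      by_cases hst : s < t <;> simp [K, indicator, hst]
  have hK_outer : ∀ s, ∫⁻ t, K t s =
      ENNReal.ofReal ϱ⁻¹ * (ENNReal.ofReal (exp (-ϱ * s)) * G s) := fun s => by
    have hK_s : ∀ t, K t s = (Ioi s).indicator (fun t => ENNReal.ofReal (exp (-ϱ * t))) t * G s :=
      fun t => by by_cases hst : s < t <;> simp [K, indicator, hst]
    rw [lintegral_congr hK_s, lintegral_mul_const _ ((by fun_prop : Measurable fun t : ℝ =>
        ENNReal.ofReal (exp (-ϱ * t))).indicator measurableSet_Ioi),
      lintegral_indicator measurableSet_Ioi, lintegral_Ioi_exp_neg_mul hϱ, div_eq_mul_inv,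
      ENNReal.ofReal_mul (exp_pos _).le]
    ring
  rw [lintegral_congr hK_inner, lintegral_lintegral_swap hK, lintegral_congr hK_outer,
    lintegral_const_mul' _ _ ENNReal.ofReal_ne_top]

end ExponentialWeights

noncomputable def weightedVolume (ϱ : ℝ) : Measure ℝ :=
  volume.withDensity fun t => ENNReal.ofReal (exp (-2 * ϱ * t))

section WeightedVolume

variable {ϱ : ℝ}

theorem measurable_weightedVolume_density (ϱ : ℝ) :
    Measurable fun t : ℝ => ENNReal.ofReal (exp (-2 * ϱ * t)) := by
  fun_prop

theorem weightedVolume_absolutelyContinuous : weightedVolume ϱ ≪ volume :=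
  withDensity_absolutelyContinuous _ _

theorem volume_absolutelyContinuous_weightedVolume : volume ≪ weightedVolume ϱ :=
  withDensity_absolutelyContinuous' (measurable_weightedVolume_density ϱ).aemeasurable
    (ae_of_all _ fun _ => (ENNReal.ofReal_pos.2 (exp_pos _)).ne')

theorem ae_weightedVolume : ae (weightedVolume ϱ) = ae volume :=
  le_antisymm weightedVolume_absolutelyContinuous.ae_le
    volume_absolutelyContinuous_weightedVolume.ae_le

theorem lintegral_weightedVolume (g : ℝ → ℝ≥0∞) :
    ∫⁻ t, g t ∂weightedVolume ϱ = ∫⁻ t, ENNReal.ofReal (exp (-2 * ϱ * t)) * g t :=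
  lintegral_withDensity_eq_lintegral_mul_non_measurable _ (measurable_weightedVolume_density ϱ)
    (ae_of_all _ fun _ => ENNReal.ofReal_lt_top) g

theorem memW_iff_memLp {H : Type*} [NormedAddCommGroup H] {u : ℝ → H} :
    memW ϱ u ↔ MemLp u 2 (weightedVolume ϱ) := by
  have hint : Integrable (fun t => ‖u t‖ ^ 2 * exp (-2 * ϱ * t)) ↔
      Integrable (fun t => ‖u t‖ ^ 2) (weightedVolume ϱ) := by
    rw [weightedVolume, integrable_withDensity_iff (measurable_weightedVolume_density ϱ)
      (ae_of_all _ fun _ => ENNReal.ofReal_lt_top)]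
    simp only [ENNReal.toReal_ofReal (exp_pos _).le]
  refine ⟨fun ⟨hm, hi⟩ => ?_, fun h => ?_⟩
  · exact (memLp_two_iff_integrable_sq_norm
      (hm.mono_ac weightedVolume_absolutelyContinuous)).2 (hint.1 hi)
  · exact ⟨h.1.mono_ac volume_absolutelyContinuous_weightedVolume,
      hint.2 ((memLp_two_iff_integrable_sq_norm h.1).1 h)⟩

theorem map_sub_const_weightedVolume (h : ℝ) :
    (weightedVolume ϱ).map (· - h) = ENNReal.ofReal (exp (-2 * ϱ * h)) • weightedVolume ϱ := by
  ext s hs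
  have hdensity : ∀ t, ENNReal.ofReal (exp (-2 * ϱ * t)) =
      ENNReal.ofReal (exp (-2 * ϱ * h)) * ENNReal.ofReal (exp (-2 * ϱ * (t - h))) := fun t => by
    rw [← ENNReal.ofReal_mul (exp_pos _).le, ← exp_add]
    ring_nf
  rw [Measure.map_apply (measurable_sub_const h) hs, Measure.smul_apply, smul_eq_mul,
    weightedVolume, withDensity_apply _ (measurable_sub_const h hs), withDensity_apply _ hs,
    setLIntegral_congr_fun (measurable_sub_const h hs) (fun t _ => hdensity t),
    lintegral_const_mul' _ _ ENNReal.ofReal_ne_top,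
    (measurePreserving_sub_right volume h).setLIntegral_comp_preimage hs
      (measurable_weightedVolume_density ϱ)]

theorem eLpNorm_comp_sub_const_weightedVolume {E : Type*} [NormedAddCommGroup E] {u : ℝ → E}
    (hu : AEStronglyMeasurable u (weightedVolume ϱ)) (h : ℝ) :
    eLpNorm (fun t => u (t - h)) 2 (weightedVolume ϱ) =
      ENNReal.ofReal (exp (-h * ϱ)) * eLpNorm u 2 (weightedVolume ϱ) := by
  have hu_map : AEStronglyMeasurable u ((weightedVolume ϱ).map (· - h)) := by
    rw [map_sub_const_weightedVolume]
    exact hu.smul_measure _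
  rw [← Function.comp_def, ← eLpNorm_map_measure hu_map (measurable_sub_const h).aemeasurable,
    map_sub_const_weightedVolume, eLpNorm_smul_measure_of_ne_top ENNReal.ofNat_ne_top,
    smul_eq_mul, ENNReal.ofReal_rpow_of_pos (exp_pos _), ← exp_mul]
  norm_num
  ring_nf

theorem MeasureTheory.MemLp.comp_sub_const_weightedVolume {E : Type*} [NormedAddCommGroup E]
    {u : ℝ → E} (hu : MemLp u 2 (weightedVolume ϱ)) (h : ℝ) :
    MemLp (fun t => u (t - h)) 2 (weightedVolume ϱ) := by
  have hu_map : AEStronglyMeasurable u ((weightedVolume ϱ).map (· - h)) := by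
    rw [map_sub_const_weightedVolume]
    exact hu.1.smul_measure _
  rw [← Function.comp_def, ← memLp_map_measure_iff hu_map (measurable_sub_const h).aemeasurable,
    map_sub_const_weightedVolume]
  exact hu.smul_measure ENNReal.ofReal_ne_top

theorem lintegral_sq_lintegral_Iio_le (hϱ : 0 < ϱ) {F : ℝ → ℝ≥0∞} (hF : AEMeasurable F) :
    ∫⁻ t, (∫⁻ s in Iio t, F s) ^ 2 ∂weightedVolume ϱ ≤
      ENNReal.ofReal ϱ⁻¹ ^ 2 * ∫⁻ t, F t ^ 2 ∂weightedVolume ϱ := by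
  have hweight : ∀ t, ENNReal.ofReal (exp (-2 * ϱ * t)) * ENNReal.ofReal (exp (ϱ * t) / ϱ) =
      ENNReal.ofReal ϱ⁻¹ * ENNReal.ofReal (exp (-ϱ * t)) := fun t => by
    rw [← ENNReal.ofReal_mul (exp_pos _).le, ← ENNReal.ofReal_mul (inv_pos.2 hϱ).le,
      mul_div_assoc', ← exp_add, div_eq_inv_mul]
    ring_nf
  have hpoint : ∀ t, ENNReal.ofReal (exp (-2 * ϱ * t)) * (∫⁻ s in Iio t, F s) ^ 2 ≤
      ENNReal.ofReal ϱ⁻¹ * (ENNReal.ofReal (exp (-ϱ * t)) *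
        ∫⁻ s in Iio t, ENNReal.ofReal (exp (-ϱ * s)) * F s ^ 2) := fun t => by
    grw [sq_lintegral_Iio_le hϱ hF t, ← mul_assoc, hweight, mul_assoc]
  calc ∫⁻ t, (∫⁻ s in Iio t, F s) ^ 2 ∂weightedVolume ϱ
      ≤ ∫⁻ t, ENNReal.ofReal ϱ⁻¹ * (ENNReal.ofReal (exp (-ϱ * t)) *
          ∫⁻ s in Iio t, ENNReal.ofReal (exp (-ϱ * s)) * F s ^ 2) := by
        rw [lintegral_weightedVolume]
        exact lintegral_mono hpoint
    _ = ENNReal.ofReal ϱ⁻¹ ^ 2 * ∫⁻ s, ENNReal.ofReal (exp (-ϱ * s)) *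
          (ENNReal.ofReal (exp (-ϱ * s)) * F s ^ 2) := by
        rw [lintegral_const_mul' _ _ ENNReal.ofReal_ne_top,
          lintegral_exp_neg_mul_mul_lintegral_Iio hϱ (by fun_prop), ← mul_assoc, sq]
    _ = ENNReal.ofReal ϱ⁻¹ ^ 2 * ∫⁻ t, F t ^ 2 ∂weightedVolume ϱ := by
        rw [lintegral_weightedVolume]
        congr 1
        refine lintegral_congr fun s => ?_
        rw [← mul_assoc, ← ENNReal.ofReal_mul (exp_pos _).le, ← exp_add]
        ring_nf

theorem eLpNorm_primitive_Iio_le {E : Type*} [NormedAddCommGroup E] [NormedSpace ℝ E]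
    (hϱ : 0 < ϱ) {g : ℝ → E} (hg : AEStronglyMeasurable g (weightedVolume ϱ)) :
    eLpNorm (fun t => ∫ s in Iio t, g s) 2 (weightedVolume ϱ) ≤
      ENNReal.ofReal ϱ⁻¹ * eLpNorm g 2 (weightedVolume ϱ) := by
  rw [← ENNReal.pow_le_pow_left_iff two_ne_zero, mul_pow, sq_eLpNorm_two, sq_eLpNorm_two]
  calc ∫⁻ t, ‖∫ s in Iio t, g s‖ₑ ^ 2 ∂weightedVolume ϱ
      ≤ ∫⁻ t, (∫⁻ s in Iio t, ‖g s‖ₑ) ^ 2 ∂weightedVolume ϱ :=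
        lintegral_mono fun t => by gcongr; exact enorm_integral_le_lintegral_enorm _
    _ ≤ _ := lintegral_sq_lintegral_Iio_le hϱ
        (hg.mono_ac volume_absolutelyContinuous_weightedVolume).enorm

theorem integrableOn_Iio_of_memLp_weightedVolume {E : Type*} [NormedAddCommGroup E]
    (hϱ : 0 < ϱ) {g : ℝ → E} (hg : MemLp g 2 (weightedVolume ϱ)) (t : ℝ) :
    IntegrableOn g (Iio t) := by
  have hg_vol : AEStronglyMeasurable g volume :=
    hg.1.mono_ac volume_absolutelyContinuous_weightedVolume
  have hweight : ∀ s ∈ Iio t, ENNReal.ofReal (exp (-ϱ * s)) * ‖g s‖ₑ ^ 2 ≤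
      ENNReal.ofReal (exp (ϱ * t)) * (ENNReal.ofReal (exp (-2 * ϱ * s)) * ‖g s‖ₑ ^ 2) := by
    intro s (hs : s < t)
    rw [← mul_assoc, ← ENNReal.ofReal_mul (exp_pos _).le, ← exp_add]
    gcongr
    nlinarith
  have hsq : (∫⁻ s in Iio t, ‖g s‖ₑ) ^ 2 < ∞ := calc
    (∫⁻ s in Iio t, ‖g s‖ₑ) ^ 2
        ≤ ENNReal.ofReal (exp (ϱ * t) / ϱ) *
          ∫⁻ s in Iio t, ENNReal.ofReal (exp (-ϱ * s)) * ‖g s‖ₑ ^ 2 :=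
      sq_lintegral_Iio_le hϱ hg_vol.enorm t
    _ ≤ ENNReal.ofReal (exp (ϱ * t) / ϱ) * (ENNReal.ofReal (exp (ϱ * t)) *
          ∫⁻ s, ‖g s‖ₑ ^ 2 ∂weightedVolume ϱ) := by
      grw [setLIntegral_mono' measurableSet_Iio hweight, setLIntegral_le_lintegral,
        lintegral_const_mul' _ _ ENNReal.ofReal_ne_top, lintegral_weightedVolume]
    _ < ∞ := by
      rw [← sq_eLpNorm_two]
      exact ENNReal.mul_lt_top ENNReal.ofReal_lt_top
        (ENNReal.mul_lt_top ENNReal.ofReal_lt_top (ENNReal.pow_lt_top hg.2))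
  exact ⟨hg_vol.restrict, (ENNReal.pow_lt_top_iff.1 hsq).resolve_right two_ne_zero⟩

theorem MeasureTheory.MemLp.primitive_Iio_weightedVolume {E : Type*} [NormedAddCommGroup E]
    [NormedSpace ℝ E] (hϱ : 0 < ϱ) {g : ℝ → E} (hg : MemLp g 2 (weightedVolume ϱ)) :
    MemLp (fun t => ∫ s in Iio t, g s) 2 (weightedVolume ϱ) :=
  ⟨(continuous_primitive_Iio (integrableOn_Iio_of_memLp_weightedVolume hϱ hg)).aestronglyMeasurable,
    (eLpNorm_primitive_Iio_le hϱ hg.1).trans_lt (ENNReal.mul_lt_top ENNReal.ofReal_lt_top hg.2)⟩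

end WeightedVolume

section NeutralEquation

variable {𝕜 H : Type*} [NontriviallyNormedField 𝕜] [NormedAddCommGroup H] [NormedSpace 𝕜 H]
  {A B C : H →L[𝕜] H} {h₁ h₂ ϱ : ℝ} {f : ℝ → H}

theorem memLp_neutralIntegrand {u : ℝ → H} (hf : MemLp f 2 (weightedVolume ϱ))
    (hu : MemLp u 2 (weightedVolume ϱ)) :
    MemLp (fun s => A (u s) + B (u (s - h₂)) + f s) 2 (weightedVolume ϱ) :=
  ((A.comp_memLp' hu).add (B.comp_memLp' (hu.comp_sub_const_weightedVolume h₂))).add hf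

variable [NormedSpace ℝ H]

variable (A B C h₁ h₂ f) in
noncomputable def neutralMap (u : ℝ → H) : ℝ → H :=
  fun t => C (u (t - h₁)) + ∫ s in Iio t, (A (u s) + B (u (s - h₂)) + f s)

theorem neutralMap_apply_eq_self_iff {u : ℝ → H} {t : ℝ} :
    neutralMap A B C h₁ h₂ f u t = u t ↔
      u t - C (u (t - h₁)) = ∫ s in Iio t, (A (u s) + B (u (s - h₂)) + f s) := by
  rw [neutralMap, eq_comm, sub_eq_iff_eq_add']

theorem neutralMap_congr_ae {u v : ℝ → H} (huv : u =ᵐ[volume] v) :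
    neutralMap A B C h₁ h₂ f u =ᵐ[volume] neutralMap A B C h₁ h₂ f v := by
  have hdelay : ∀ h : ℝ, (fun t => u (t - h)) =ᵐ[volume] fun t => v (t - h) := fun h =>
    (measurePreserving_sub_right volume h).quasiMeasurePreserving.ae_eq_comp huv
  have hintegral : ∀ t, ∫ s in Iio t, (A (u s) + B (u (s - h₂)) + f s) =
      ∫ s in Iio t, (A (v s) + B (v (s - h₂)) + f s) := fun t =>
    integral_congr_ae <| ae_restrict_of_ae <| (huv.and (hdelay h₂)).mono fun s hs => by
      simp only [hs.1, hs.2]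
  filter_upwards [hdelay h₁] with t ht
  simp only [neutralMap, ht, hintegral]

theorem memLp_neutralMap (hϱ : 0 < ϱ) {u : ℝ → H} (hf : MemLp f 2 (weightedVolume ϱ))
    (hu : MemLp u 2 (weightedVolume ϱ)) :
    MemLp (neutralMap A B C h₁ h₂ f u) 2 (weightedVolume ϱ) :=
  (C.comp_memLp' (hu.comp_sub_const_weightedVolume h₁)).add
    (MemLp.primitive_Iio_weightedVolume hϱ (memLp_neutralIntegrand hf hu))

theorem neutralMap_sub (hϱ : 0 < ϱ) {u v : ℝ → H} (hf : MemLp f 2 (weightedVolume ϱ))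
    (hu : MemLp u 2 (weightedVolume ϱ)) (hv : MemLp v 2 (weightedVolume ϱ)) :
    neutralMap A B C h₁ h₂ f u - neutralMap A B C h₁ h₂ f v =
      neutralMap A B C h₁ h₂ 0 (u - v) := by
  funext t
  simp only [neutralMap, Pi.sub_apply, Pi.zero_apply, add_zero, map_sub]
  rw [add_sub_add_comm, ← integral_sub
    (integrableOn_Iio_of_memLp_weightedVolume hϱ (memLp_neutralIntegrand hf hu) t)
    (integrableOn_Iio_of_memLp_weightedVolume hϱ (memLp_neutralIntegrand hf hv) t)]
  congr 1
  exact setIntegral_congr_fun measurableSet_Iio fun s _ => by abel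

theorem eLpNorm_neutralMap_zero_le (hϱ : 0 < ϱ) {w : ℝ → H}
    (hw : MemLp w 2 (weightedVolume ϱ)) :
    eLpNorm (neutralMap A B C h₁ h₂ 0 w) 2 (weightedVolume ϱ) ≤
      ENNReal.ofReal (‖C‖ * exp (-h₁ * ϱ) + ϱ⁻¹ * (‖A‖ + ‖B‖ * exp (-h₂ * ϱ))) *
        eLpNorm w 2 (weightedVolume ϱ) := by
  have hw₂ := hw.comp_sub_const_weightedVolume h₂
  have hconst : ENNReal.ofReal (‖C‖ * exp (-h₁ * ϱ) + ϱ⁻¹ * (‖A‖ + ‖B‖ * exp (-h₂ * ϱ))) =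
      ‖C‖ₑ * ENNReal.ofReal (exp (-h₁ * ϱ)) +
        ENNReal.ofReal ϱ⁻¹ * (‖A‖ₑ + ‖B‖ₑ * ENNReal.ofReal (exp (-h₂ * ϱ))) := by
    rw [ENNReal.ofReal_add (by positivity) (by positivity), ENNReal.ofReal_mul (norm_nonneg _),
      ENNReal.ofReal_mul (by positivity), ENNReal.ofReal_add (norm_nonneg _) (by positivity),
      ENNReal.ofReal_mul (norm_nonneg _), ofReal_norm, ofReal_norm, ofReal_norm]
  set g : ℝ → H := (fun s => A (w s)) + fun s => B (w (s - h₂))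
  have hg : MemLp g 2 (weightedVolume ϱ) := (A.comp_memLp' hw).add (B.comp_memLp' hw₂)
  unfold neutralMap
  simp only [Pi.zero_apply, add_zero]
  calc eLpNorm ((fun t => C (w (t - h₁))) + fun t => ∫ s in Iio t, g s) 2 (weightedVolume ϱ)
      ≤ eLpNorm (fun t => C (w (t - h₁))) 2 (weightedVolume ϱ) +
          eLpNorm (fun t => ∫ s in Iio t, g s) 2 (weightedVolume ϱ) :=
        eLpNorm_add_le (C.comp_memLp' (hw.comp_sub_const_weightedVolume h₁)).1
          (MemLp.primitive_Iio_weightedVolume hϱ hg).1 one_le_two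
    _ ≤ ‖C‖ₑ * (ENNReal.ofReal (exp (-h₁ * ϱ)) * eLpNorm w 2 (weightedVolume ϱ)) +
          ENNReal.ofReal ϱ⁻¹ * eLpNorm g 2 (weightedVolume ϱ) := by
      grw [C.eLpNorm_comp_le (fun t => w (t - h₁)), eLpNorm_comp_sub_const_weightedVolume hw.1,
        eLpNorm_primitive_Iio_le hϱ hg.1]
    _ ≤ ‖C‖ₑ * (ENNReal.ofReal (exp (-h₁ * ϱ)) * eLpNorm w 2 (weightedVolume ϱ)) +
          ENNReal.ofReal ϱ⁻¹ * (‖A‖ₑ * eLpNorm w 2 (weightedVolume ϱ) +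
            ‖B‖ₑ * (ENNReal.ofReal (exp (-h₂ * ϱ)) * eLpNorm w 2 (weightedVolume ϱ))) := by
      gcongr
      calc eLpNorm g 2 (weightedVolume ϱ)
          ≤ eLpNorm (fun s => A (w s)) 2 (weightedVolume ϱ) +
              eLpNorm (fun s => B (w (s - h₂))) 2 (weightedVolume ϱ) :=
            eLpNorm_add_le (A.comp_memLp' hw).1 (B.comp_memLp' hw₂).1 one_le_two
        _ ≤ _ := by
          grw [A.eLpNorm_comp_le, B.eLpNorm_comp_le (fun s => w (s - h₂)),
            eLpNorm_comp_sub_const_weightedVolume hw.1]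
    _ = _ := by rw [hconst]; ring

theorem eLpNorm_neutralMap_sub_le (hϱ : 0 < ϱ) {u v : ℝ → H}
    (hf : MemLp f 2 (weightedVolume ϱ)) (hu : MemLp u 2 (weightedVolume ϱ))
    (hv : MemLp v 2 (weightedVolume ϱ)) :
    eLpNorm (neutralMap A B C h₁ h₂ f u - neutralMap A B C h₁ h₂ f v) 2 (weightedVolume ϱ) ≤
      ENNReal.ofReal (‖C‖ * exp (-h₁ * ϱ) + ϱ⁻¹ * (‖A‖ + ‖B‖ * exp (-h₂ * ϱ))) *
        eLpNorm (u - v) 2 (weightedVolume ϱ) := by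
  rw [neutralMap_sub hϱ hf hu hv]
  exact eLpNorm_neutralMap_zero_le hϱ (hu.sub hv)

end NeutralEquation

theorem stmt18_general {H : Type*} [NormedAddCommGroup H] [InnerProductSpace ℂ H] [CompleteSpace H]
    (A B C : H →L[ℂ] H) (h₁ h₂ ϱ : ℝ) (hϱ : 0 < ϱ)
    (hbig : ‖A‖ + ‖B‖ * Real.exp (-h₂ * ϱ) < ϱ * (1 - ‖C‖ * Real.exp (-h₁ * ϱ)))
    (f : ℝ → H) (hf : memW ϱ f) :
    ∃ u : ℝ → H, memW ϱ u ∧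
      (∀ᵐ t : ℝ ∂volume,
        u t - C (u (t - h₁)) = ∫ s in Set.Iio t, (A (u s) + B (u (s - h₂)) + f s)) ∧
      ∀ v : ℝ → H, memW ϱ v →
        (∀ᵐ t : ℝ ∂volume,
          v t - C (v (t - h₁)) = ∫ s in Set.Iio t, (A (v s) + B (v (s - h₂)) + f s)) →
        v =ᵐ[volume] u := by
  have hk : (‖C‖ * exp (-h₁ * ϱ) + ϱ⁻¹ * (‖A‖ + ‖B‖ * exp (-h₂ * ϱ))).toNNReal < 1 := by
    rw [Real.toNNReal_lt_one]
    linarith [(inv_mul_lt_iff₀ hϱ).2 hbig]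
  have hf_mem := memW_iff_memLp.1 hf
  obtain ⟨u, hu, hu_fix, hu_unique⟩ :=
    exists_ae_fixedPoint_of_eLpNorm_contraction (Φ := neutralMap A B C h₁ h₂ f) hk
      (fun _ hu => memLp_neutralMap hϱ hf_mem hu)
      (fun _ _ huv => by rw [ae_weightedVolume] at huv ⊢; exact neutralMap_congr_ae huv)
      (fun _ _ hu hv => eLpNorm_neutralMap_sub_le hϱ hf_mem hu hv)
  simp only [ae_weightedVolume] at hu_fix hu_unique
  exact ⟨u, memW_iff_memLp.2 hu, hu_fix.mono fun t ht => neutralMap_apply_eq_self_iff.1 ht,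
    fun v hv hv_eq => hu_unique v (memW_iff_memLp.1 hv)
      (hv_eq.mono fun t ht => neutralMap_apply_eq_self_iff.2 ht)⟩

/-- Unique solvability of the neutral equation
`u - Cτ_{-h₁}u = ∫_{-∞}^· (Au + Bτ_{-h₂}u + f)` in `H_{ϱ,0}(ℝ; H)`. -/
theorem stmt18 {H : Type*} [NormedAddCommGroup H] [InnerProductSpace ℂ H] [CompleteSpace H]
    (A B C : H →L[ℂ] H) (h₁ h₂ ϱ : ℝ) (hh₁ : 0 < h₁) (hh₂ : 0 < h₂) (hϱ : 0 < ϱ)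
    (hC : ‖C‖ * Real.exp (-h₁ * ϱ) < 1)
    (hbig : ‖A‖ + ‖B‖ * Real.exp (-h₂ * ϱ) < ϱ * (1 - ‖C‖ * Real.exp (-h₁ * ϱ)))
    (f : ℝ → H) (hf : memW ϱ f) :
    ∃ u : ℝ → H, memW ϱ u ∧
      (∀ᵐ t : ℝ ∂volume,
        u t - C (u (t - h₁)) = ∫ s in Set.Iio t, (A (u s) + B (u (s - h₂)) + f s)) ∧
      ∀ v : ℝ → H, memW ϱ v →
        (∀ᵐ t : ℝ ∂volume,
          v t - C (v (t - h₁)) = ∫ s in Set.Iio t, (A (v s) + B (v (s - h₂)) + f s)) →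
        v =ᵐ[volume] u :=
  stmt18_general A B C h₁ h₂ ϱ hϱ hbig f hf
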